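/- arXiv:2104.03268 — 5 statements merged into one kernel-verified Lean document; each statement's English description precedes it below -/
import Mathlib

section
/- Let S be a real symmetric positive definite n×n matrix and A a real skew-symmetric n×n matrix. Then det(S + A) ≥ det(S) > 0; in particular S + A is invertible. -/
/-!
Since `xᵀ A x = 0` for skew-symmetric `A`, the quadratic form of `S + tA` is that of `S`, so
`S + tA` is invertible for every `t`, and by continuity `det (S + A)` has the sign of `det S > 0`.
Writing `S = Yᵀ Y` turns `S + A` into `Yᵀ (1 + B) Y` with `B` skew-symmetric, and
`det (1 + B)² = det ((1 + B)ᵀ (1 + B)) = det (1 + Bᵀ B) ≥ 1`, so `det (S + A) ≥ det S`.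
-/

open Matrix

namespace Matrix

variable {m : Type*} [Fintype m]

theorem dotProduct_mulVec_self_eq_zero_of_transpose_eq_neg {A : Matrix m m ℝ} (hA : Aᵀ = -A)
    (x : m → ℝ) : x ⬝ᵥ A *ᵥ x = 0 := by
  have h : x ⬝ᵥ A *ᵥ x = -(x ⬝ᵥ A *ᵥ x) := by
    conv_lhs =>
      rw [dotProduct_mulVec, ← transpose_transpose A, vecMul_transpose, hA, dotProduct_comm]
    rw [neg_mulVec, dotProduct_neg]
  linarith

variable [DecidableEq m]

theorem PosSemidef.one_le_det_one_add {M : Matrix m m ℝ} (hM : M.PosSemidef) :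
    1 ≤ (1 + M).det := by
  rw [hM.1.spectral_theorem, ← map_one (Unitary.conjStarAlgAut ℝ _ hM.1.eigenvectorUnitary),
    ← map_add, Unitary.conjStarAlgAut_apply, det_mul, det_mul, mul_comm, ← mul_assoc, ← det_mul,
    Unitary.coe_star_mul_self, det_one, one_mul, ← diagonal_one, diagonal_add, det_diagonal]
  exact Finset.one_le_prod fun i _ ↦ by simpa using hM.eigenvalues_nonneg i

theorem PosDef.det_add_ne_zero_of_transpose_eq_neg {S A : Matrix m m ℝ} (hS : S.PosDef)
    (hA : Aᵀ = -A) : (S + A).det ≠ 0 := by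
  rw [Ne, ← exists_mulVec_eq_zero_iff]
  rintro ⟨v, hv, hSAv⟩
  have hpos : 0 < v ⬝ᵥ S *ᵥ v := by simpa only [star_trivial] using hS.dotProduct_mulVec_pos hv
  have hzero : v ⬝ᵥ S *ᵥ v = 0 :=
    calc v ⬝ᵥ S *ᵥ v = v ⬝ᵥ (S + A) *ᵥ v := by
          rw [add_mulVec, dotProduct_add, dotProduct_mulVec_self_eq_zero_of_transpose_eq_neg hA,
            add_zero]
      _ = 0 := by rw [hSAv, dotProduct_zero]
  exact hpos.ne' hzero

theorem PosDef.det_add_pos_of_transpose_eq_neg {S A : Matrix m m ℝ} (hS : S.PosDef)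
    (hA : Aᵀ = -A) : 0 < (S + A).det := by
  set f : ℝ → ℝ := fun t ↦ (S + t • A).det
  have hf : Continuous f := by fun_prop
  have hf0 : f 0 = S.det := by simp [f]
  have hf1 : f 1 = (S + A).det := by simp [f]
  by_contra! hnonpos
  obtain ⟨t, -, ht⟩ := intermediate_value_Icc' zero_le_one hf.continuousOn
    ⟨hf1 ▸ hnonpos, hf0 ▸ hS.det_pos.le⟩
  refine hS.det_add_ne_zero_of_transpose_eq_neg (A := t • A) ?_ ht
  rw [transpose_smul, hA, smul_neg]

theorem one_le_det_one_add_of_transpose_eq_neg {B : Matrix m m ℝ} (hB : Bᵀ = -B) :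
    1 ≤ (1 + B).det := by
  have hsq : (1 + B).det ^ 2 = (1 + Bᵀ * B).det := by
    have : (1 + B)ᵀ * (1 + B) = 1 + Bᵀ * B := by
      rw [transpose_add, transpose_one, hB]
      noncomm_ring
    rw [← this, det_mul, det_transpose, sq]
  have hpos : 0 < (1 + B).det := PosDef.one.det_add_pos_of_transpose_eq_neg hB
  have hge : 1 ≤ (1 + B).det ^ 2 :=
    hsq ▸ PosSemidef.one_le_det_one_add (by simpa using posSemidef_conjTranspose_mul_self B)
  nlinarith

open scoped MatrixOrder in
theorem PosDef.det_le_det_add_of_transpose_eq_neg {S A : Matrix m m ℝ} (hS : S.PosDef)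
    (hA : Aᵀ = -A) : S.det ≤ (S + A).det := by
  obtain ⟨Y, hY, rfl⟩ :=
    CStarAlgebra.isStrictlyPositive_iff_eq_star_mul_self.mp hS.isStrictlyPositive
  rw [isUnit_iff_isUnit_det] at hY
  rw [star_eq_conjTranspose, conjTranspose_eq_transpose_of_trivial] at hS ⊢
  set B := (Y⁻¹)ᵀ * A * Y⁻¹
  have hB : Bᵀ = -B := by
    simp only [B, transpose_mul, transpose_transpose, hA, Matrix.mul_assoc, Matrix.neg_mul,
      Matrix.mul_neg]
  have hfactor : Yᵀ * (1 + B) * Y = Yᵀ * Y + A := by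
    rw [Matrix.mul_add, Matrix.add_mul, Matrix.mul_one]
    congr 1
    simp only [B, ← Matrix.mul_assoc, ← transpose_mul, nonsing_inv_mul _ hY, transpose_one,
      Matrix.one_mul]
    rw [Matrix.mul_assoc, nonsing_inv_mul _ hY, Matrix.mul_one]
  calc (Yᵀ * Y).det ≤ (Yᵀ * Y).det * (1 + B).det :=
        le_mul_of_one_le_right hS.det_pos.le (one_le_det_one_add_of_transpose_eq_neg hB)
    _ = (Yᵀ * Y + A).det := by rw [← hfactor, det_mul, det_mul, det_mul]; ring

end Matrix

theorem stmt_4_general {n : ℕ} (S A : Matrix (Fin n) (Fin n) ℝ)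
    (hSpd : S.PosDef) (hA : Aᵀ = -A) :
    S.det ≤ (S + A).det ∧ 0 < S.det ∧ IsUnit (S + A) :=
  ⟨hSpd.det_le_det_add_of_transpose_eq_neg hA, hSpd.det_pos,
    (isUnit_iff_isUnit_det _).mpr (hSpd.det_add_pos_of_transpose_eq_neg hA).ne'.isUnit⟩

/-- If `S` is real symmetric positive definite and `A` is real skew-symmetric, then
`det (S + A) ≥ det S > 0`; in particular `S + A` is invertible. -/
theorem stmt_4 {n : ℕ} (S A : Matrix (Fin n) (Fin n) ℝ)
    (hS : S.IsSymm) (hSpd : S.PosDef) (hA : Aᵀ = -A) :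
    S.det ≤ (S + A).det ∧ 0 < S.det ∧ IsUnit (S + A) :=
  stmt_4_general S A hSpd hA
end

section
/- Let H be a real symmetric positive definite n×n matrix and B a real skew-symmetric n×n matrix such that the Hermitian matrix H + iB is positive definite. Then the real symmetric matrix H + B H⁻¹ B is positive definite, and the inverse of H + iB is given by (H + iB)⁻¹ = X − i H⁻¹ B X, where X = (H + B H⁻¹ B)⁻¹. In particular the real part of (H + iB)⁻¹ equals (H + B H⁻¹ B)⁻¹. -/
open Matrix ComplexOrder

/-!
Write `S = H + B H⁻¹ B` and `N = H⁻¹ B`. Since `H N = B`, the factorisation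
`(H + iB)(1 - iN) = S` holds over `ℂ`. Inverting it gives `(H + iB)⁻¹ = (1 - iN) S⁻¹` as soon
as `S` is invertible. Positivity of `S` comes from the same factorisation: for a real `x ≠ 0`,
the vector `z = (1 - iN) x` is nonzero and `z* (H + iB) z = z* S x`, whose real part is `xᵀ S x`.
-/

section

open Complex

variable {ι : Type*} [Fintype ι]

lemma map_ofReal_mul {m o : Type*} (A : Matrix m ι ℝ) (C : Matrix ι o ℝ) :
    (A * C).map ofReal = A.map ofReal * C.map ofReal :=
  Matrix.map_mul (f := ofRealHom)

lemma map_ofReal_mulVec {m : Type*} (A : Matrix m ι ℝ) (v : ι → ℝ) :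
    A.map ofReal *ᵥ (fun i => (v i : ℂ)) = fun i => ((A *ᵥ v) i : ℂ) :=
  funext fun i => (RingHom.map_mulVec ofRealHom A v i).symm

lemma re_star_sub_I_mul_dotProduct (x w y : ι → ℝ) :
    (star (fun i => (x i : ℂ) - I * w i) ⬝ᵥ fun i => (y i : ℂ)).re = x ⬝ᵥ y := by
  simp [dotProduct, re_sum]

variable [DecidableEq ι]

lemma map_ofReal_add_I_smul_mul_one_sub_I_smul {H B N : Matrix ι ι ℝ} (hN : H * N = B) :
    (H.map ofReal + I • B.map ofReal) * (1 - I • N.map ofReal) = (H + B * N).map ofReal := by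
  have hHN := congrArg (Matrix.map · ofReal) hN
  simp only [map_ofReal_mul] at hHN
  simp only [Matrix.map_add _ ofReal_add, map_ofReal_mul, Matrix.add_mul, Matrix.mul_sub,
    Matrix.mul_one, Matrix.mul_smul, Matrix.smul_mul]
  rw [hHN, smul_add, smul_smul, I_mul_I, neg_one_smul]
  abel

theorem inv_map_ofReal_add_I_smul {H B : Matrix ι ι ℝ} (hH : IsUnit H.det)
    (hS : IsUnit (H + B * H⁻¹ * B).det) :
    (H.map ofReal + I • B.map ofReal)⁻¹ =
      ((H + B * H⁻¹ * B)⁻¹).map ofReal - I • (H⁻¹ * B * (H + B * H⁻¹ * B)⁻¹).map ofReal := by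
  apply inv_eq_right_inv
  have hfactor : ((H + B * H⁻¹ * B)⁻¹).map ofReal -
      I • (H⁻¹ * B * (H + B * H⁻¹ * B)⁻¹).map ofReal =
      (1 - I • (H⁻¹ * B).map ofReal) * ((H + B * H⁻¹ * B)⁻¹).map ofReal := by
    rw [Matrix.sub_mul, Matrix.one_mul, Matrix.smul_mul, map_ofReal_mul]
  rw [hfactor, ← Matrix.mul_assoc,
    map_ofReal_add_I_smul_mul_one_sub_I_smul (mul_nonsing_inv_cancel_left H B hH),
    ← Matrix.mul_assoc B, ← map_ofReal_mul, mul_nonsing_inv _ hS]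
  exact Matrix.map_one _ ofReal_zero ofReal_one

lemma isHermitian_add_mul_nonsing_inv_mul {H B : Matrix ι ι ℝ} (hH : H.IsHermitian)
    (hB : Bᵀ = -B) : (H + B * H⁻¹ * B).IsHermitian := by
  have hHT : Hᵀ = H := hH
  rw [IsHermitian, conjTranspose_eq_transpose_of_trivial, transpose_add, transpose_mul,
    transpose_mul, hB, transpose_nonsing_inv, hHT]
  simp only [Matrix.neg_mul, Matrix.mul_neg, neg_neg, Matrix.mul_assoc]

theorem posDef_add_mul_nonsing_inv_mul {H B : Matrix ι ι ℝ} (hH : H.PosDef) (hB : Bᵀ = -B)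
    (hpd : (H.map ofReal + I • B.map ofReal).PosDef) :
    (H + B * H⁻¹ * B).PosDef := by
  refine .of_dotProduct_mulVec_pos (isHermitian_add_mul_nonsing_inv_mul hH.1 hB) fun x hx => ?_
  have hN : H * (H⁻¹ * B) = B := mul_nonsing_inv_cancel_left H B hH.det_pos.ne'.isUnit
  set z : ι → ℂ := fun i => (x i : ℂ) - I * ((H⁻¹ * B) *ᵥ x) i
  have hz : z = (1 - I • (H⁻¹ * B).map ofReal) *ᵥ fun i => (x i : ℂ) := by
    ext i
    simp [z, sub_mulVec, smul_mulVec, map_ofReal_mulVec]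
  have hz0 : z ≠ 0 := fun h =>
    hx (funext fun i => by simpa [z] using congrArg re (congrFun h i))
  have hMz : (H.map ofReal + I • B.map ofReal) *ᵥ z =
      fun i => (((H + B * H⁻¹ * B) *ᵥ x) i : ℂ) := by
    rw [hz, mulVec_mulVec, map_ofReal_add_I_smul_mul_one_sub_I_smul hN, ← Matrix.mul_assoc,
      map_ofReal_mulVec]
  have hpos := (lt_def.1 (hpd.dotProduct_mulVec_pos hz0)).1
  rw [hMz, re_star_sub_I_mul_dotProduct] at hpos
  simpa [star_trivial] using hpos

end

theorem stmt_6_general {n : ℕ} (H B : Matrix (Fin n) (Fin n) ℝ)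
    (hHpd : H.PosDef) (hB : Bᵀ = -B)
    (hpd : (H.map (fun x => (x : ℂ)) + Complex.I • B.map (fun x => (x : ℂ))).PosDef) :
    (H + B * H⁻¹ * B).PosDef ∧
    (H.map (fun x => (x : ℂ)) + Complex.I • B.map (fun x => (x : ℂ)))⁻¹ =
      ((H + B * H⁻¹ * B)⁻¹).map (fun x => (x : ℂ)) -
        Complex.I • ((H⁻¹ * B * (H + B * H⁻¹ * B)⁻¹).map (fun x => (x : ℂ))) ∧
    ∀ i j, (((H.map (fun x => (x : ℂ)) + Complex.I • B.map (fun x => (x : ℂ)))⁻¹) i j).re =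
      (H + B * H⁻¹ * B)⁻¹ i j := by
  have hS := posDef_add_mul_nonsing_inv_mul hHpd hB hpd
  have hinv := inv_map_ofReal_add_I_smul hHpd.det_pos.ne'.isUnit hS.det_pos.ne'.isUnit
  refine ⟨hS, hinv, fun i j => ?_⟩
  simp [hinv]

/-- If `H` is real symmetric positive definite, `B` real skew-symmetric, and the Hermitian
matrix `H + iB` is positive definite, then `H + B H⁻¹ B` is positive definite and
`(H + iB)⁻¹ = X - i H⁻¹ B X` with `X = (H + B H⁻¹ B)⁻¹`; in particular the real part of
`(H + iB)⁻¹` equals `(H + B H⁻¹ B)⁻¹`. -/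
theorem stmt_6 {n : ℕ} (H B : Matrix (Fin n) (Fin n) ℝ)
    (hH : H.IsSymm) (hHpd : H.PosDef) (hB : Bᵀ = -B)
    (hpd : (H.map (fun x => (x : ℂ)) + Complex.I • B.map (fun x => (x : ℂ))).PosDef) :
    (H + B * H⁻¹ * B).PosDef ∧
    (H.map (fun x => (x : ℂ)) + Complex.I • B.map (fun x => (x : ℂ)))⁻¹ =
      ((H + B * H⁻¹ * B)⁻¹).map (fun x => (x : ℂ)) -
        Complex.I • ((H⁻¹ * B * (H + B * H⁻¹ * B)⁻¹).map (fun x => (x : ℂ))) ∧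
    ∀ i j, (((H.map (fun x => (x : ℂ)) + Complex.I • B.map (fun x => (x : ℂ)))⁻¹) i j).re =
      (H + B * H⁻¹ * B)⁻¹ i j :=
  stmt_6_general H B hHpd hB hpd
end

section
/- Let V be a real inner product space of dimension 2m, g its inner product, and I, J two orthogonal complex structures on V (J² = I² = −Id, g(JX,JY) = g(IX,IY) = g(X,Y)) such that I + J is invertible. Define F := −2 g((I+J)⁻¹ · , ·). Then F is skew-symmetric (a 2-form), F is nondegenerate, and −F(J·,·) = g + b where b := −g((I+J)⁻¹(I−J)·,·) is skew-symmetric; similarly −F(I·,·) = g − b. -/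
open RealInnerProductSpace

/-- Pointwise linear algebra of a generalized Kähler structure of symplectic type:
given orthogonal complex structures `I, J` on a `2m`-dimensional real inner product space
with `I + J` invertible (with inverse `K`), the form `F(x,y) = -2⟨K x, y⟩` is
skew-symmetric and nondegenerate, `b(x,y) = -⟨K (I - J) x, y⟩` is skew-symmetric, and
`-F(J·,·) = g + b`, `-F(I·,·) = g - b`. -/
theorem stmt_12 {m : ℕ} (V : Type*) [NormedAddCommGroup V] [InnerProductSpace ℝ V]
    [FiniteDimensional ℝ V] (hdim : Module.finrank ℝ V = 2 * m)
    (I J K : V →ₗ[ℝ] V)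
    (hI2 : I ∘ₗ I = -LinearMap.id) (hJ2 : J ∘ₗ J = -LinearMap.id)
    (hIo : ∀ x y : V, ⟪I x, I y⟫ = ⟪x, y⟫) (hJo : ∀ x y : V, ⟪J x, J y⟫ = ⟪x, y⟫)
    (hK1 : (I + J) ∘ₗ K = LinearMap.id) (hK2 : K ∘ₗ (I + J) = LinearMap.id) :
    (∀ x y : V, (-2 * ⟪K x, y⟫) = -(-2 * ⟪K y, x⟫)) ∧
    (∀ x : V, (∀ y : V, -2 * ⟪K x, y⟫ = 0) → x = 0) ∧
    (∀ x y : V, (-⟪(K ∘ₗ (I - J)) x, y⟫) = -(-⟪(K ∘ₗ (I - J)) y, x⟫)) ∧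
    (∀ x y : V, -(-2 * ⟪K (J x), y⟫) = ⟪x, y⟫ + (-⟪(K ∘ₗ (I - J)) x, y⟫)) ∧
    (∀ x y : V, -(-2 * ⟪K (I x), y⟫) = ⟪x, y⟫ - (-⟪(K ∘ₗ (I - J)) x, y⟫)) := by
  have hIc : ∀ x : V, I (I x) = -x := fun x => by
    have := congrArg (fun f => f x) hI2; simpa using this
  have hJc : ∀ x : V, J (J x) = -x := fun x => by
    have := congrArg (fun f => f x) hJ2; simpa using this
  -- adjoint of I and J is the negative
  have hIa : ∀ x y : V, ⟪I x, y⟫ = -⟪x, I y⟫ := fun x y => by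
    have h := hIo x (I y)
    rw [hIc, inner_neg_right] at h
    linarith
  have hJa : ∀ x y : V, ⟪J x, y⟫ = -⟪x, J y⟫ := fun x y => by
    have h := hJo x (J y)
    rw [hJc, inner_neg_right] at h
    linarith
  have hK1' : ∀ x : V, I (K x) + J (K x) = x := fun x => by
    have := congrArg (fun f => f x) hK1; simpa using this
  have hK2' : ∀ x : V, K (I x) + K (J x) = x := fun x => by
    have := congrArg (fun f => f x) hK2; simpa [map_add] using this
  -- adjoint of K is -K
  have hKa : ∀ x y : V, ⟪K x, y⟫ = -⟪x, K y⟫ := fun x y => by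
    have h1 : ⟪K x, y⟫ = ⟪K x, I (K y)⟫ + ⟪K x, J (K y)⟫ := by
      rw [← inner_add_right, hK1']
    have h2 : ⟪K x, I (K y)⟫ = -⟪I (K x), K y⟫ := by
      rw [real_inner_comm, hIa, real_inner_comm]
    have h3 : ⟪K x, J (K y)⟫ = -⟪J (K x), K y⟫ := by
      rw [real_inner_comm, hJa, real_inner_comm]
    have h4 : ⟪I (K x), K y⟫ + ⟪J (K x), K y⟫ = ⟪x, K y⟫ := by
      rw [← inner_add_left, hK1']
    linarith
  -- anticommutation: (I-J)∘K = -(K∘(I-J))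
  have hanti : ∀ y : V, I (K y) - J (K y) = -(K (I y) - K (J y)) := by
    intro y
    set v := K y with hv
    have hvy : I v + J v = y := hK1' y
    have hJI : J (I v) = J y + v := by
      have : J (I v + J v) = J y := by rw [hvy]
      rw [map_add, hJc] at this
      linear_combination (norm := module) this
    have hIJ : I (J v) = I y + v := by
      have : I (I v + J v) = I y := by rw [hvy]
      rw [map_add, hIc] at this
      linear_combination (norm := module) this
    set u := (I v - J v) + (K (I y) - K (J y)) with hu
    have hIJu : I u + J u = 0 := by
      have h1 : I (I v - J v) + J (I v - J v) = J y - I y := by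
        rw [map_sub, map_sub, hIc, hJc, hIJ, hJI]
        module
      have h2 : I (K (I y) - K (J y)) + J (K (I y) - K (J y)) = I y - J y := by
        have e1 := hK1' (I y)
        have e2 := hK1' (J y)
        rw [map_sub, map_sub]
        linear_combination (norm := module) e1 - e2
      rw [hu, map_add, map_add]
      linear_combination (norm := module) h1 + h2
    have hu0 : u = 0 := by
      have := hK2' u
      have hJu : J u = -(I u) := by linear_combination (norm := module) hIJu
      rw [hJu, map_neg] at this
      linear_combination (norm := module) -this
    linear_combination (norm := module) hu0
  have hFskew : ∀ x y : V, ⟪K x, y⟫ = -⟪K y, x⟫ := fun x y => by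
    rw [hKa, real_inner_comm]
  refine ⟨fun x y => by have := hFskew x y; linarith, ?_, ?_, ?_, ?_⟩
  · intro x hx
    have h0 : K x = 0 := by
      have := hx (K x)
      have h : ⟪K x, K x⟫ = 0 := by linarith
      exact inner_self_eq_zero.mp h
    have := hK1' x
    rw [h0] at this
    simpa using this.symm
  · intro x y
    simp only [LinearMap.comp_apply, LinearMap.sub_apply, map_sub]
    have h1 : ⟪K (I x) - K (J x), y⟫ = ⟪K (I x - J x), y⟫ := by rw [map_sub]
    have h2 : ⟪K (I x - J x), y⟫ = -⟪I x - J x, K y⟫ := hKa _ _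
    have h3 : ⟪I x - J x, K y⟫ = ⟪I x, K y⟫ - ⟪J x, K y⟫ := inner_sub_left _ _ _
    have h4 : ⟪I x, K y⟫ = -⟪x, I (K y)⟫ := hIa _ _
    have h5 : ⟪J x, K y⟫ = -⟪x, J (K y)⟫ := hJa _ _
    have h6 : ⟪x, I (K y)⟫ - ⟪x, J (K y)⟫ = ⟪x, I (K y) - J (K y)⟫ :=
      (inner_sub_right _ _ _).symm
    have h7 : ⟪x, I (K y) - J (K y)⟫ = -⟪x, K (I y) - K (J y)⟫ := by
      rw [hanti, inner_neg_right]
    have h8 : ⟪x, K (I y) - K (J y)⟫ = ⟪K (I y) - K (J y), x⟫ := real_inner_comm _ _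
    linarith
  · intro x y
    have h : K (J x) + K (J x) = x - (K (I x) - K (J x)) := by
      linear_combination (norm := module) (hK2' x)
    have h' : ⟪K (J x) + K (J x), y⟫ = ⟪x - (K (I x) - K (J x)), y⟫ := by rw [h]
    rw [inner_add_left, inner_sub_left, inner_sub_left] at h'
    simp only [LinearMap.comp_apply, LinearMap.sub_apply, map_sub]
    rw [inner_sub_left]
    linarith
  · intro x y
    have h : K (I x) + K (I x) = x + (K (I x) - K (J x)) := by
      linear_combination (norm := module) (hK2' x)
    have h' : ⟪K (I x) + K (I x), y⟫ = ⟪x + (K (I x) - K (J x)), y⟫ := by rw [h]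
    rw [inner_add_left, inner_add_left, inner_sub_left] at h'
    simp only [LinearMap.comp_apply, LinearMap.sub_apply, map_sub]
    rw [inner_sub_left]
    linarith
end

section
/- Let H : (−ε, ε) → ℝ^{n×n} be a smooth family of real symmetric positive definite matrices and B a fixed real skew-symmetric matrix, and assume H(s)⁻¹ + iB is (Hermitian) positive definite for all s. Then, writing Ḣ = H′(0) and H = H(0), one has d/ds|_{s=0} log det(H(s)⁻¹ + iB) = −tr( (H + H B H B H)⁻¹ Ḣ ). In particular this derivative is real. -/
open Matrix ComplexOrder

noncomputable def detCM (n : ℕ) : ContinuousMultilinearMap ℝ (fun _ : Fin n => (Fin n → ℝ)) ℝ where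
  toMultilinearMap := (Matrix.detRowAlternating : (Fin n → ℝ) [⋀^Fin n]→ₗ[ℝ] ℝ).toMultilinearMap
  cont := by
    have h : ⇑(Matrix.detRowAlternating : (Fin n → ℝ) [⋀^Fin n]→ₗ[ℝ] ℝ).toMultilinearMap
        = fun v : Fin n → Fin n → ℝ => ∑ σ : Equiv.Perm (Fin n),
            (Equiv.Perm.sign σ : ℝ) * ∏ i, v (σ i) i := by
      funext v
      exact Matrix.det_apply' (Matrix.of v)
    show Continuous ⇑(Matrix.detRowAlternating : (Fin n → ℝ) [⋀^Fin n]→ₗ[ℝ] ℝ).toMultilinearMap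
    rw [h]
    exact continuous_finset_sum _ fun σ _ =>
      continuous_const.mul (continuous_finset_prod _ fun i _ =>
        (continuous_apply i).comp (continuous_apply (σ i)))

lemma detCM_apply {n : ℕ} (v : Fin n → Fin n → ℝ) : detCM n v = (Matrix.of v).det := rfl

theorem hasDerivAt_det' {n : ℕ} {M : ℝ → Matrix (Fin n) (Fin n) ℝ}
    {M' : Matrix (Fin n) (Fin n) ℝ} {x : ℝ}
    (h : ∀ i j, HasDerivAt (fun s => M s i j) (M' i j) x) :
    HasDerivAt (fun s => (M s).det) (∑ i, ((M x).updateRow i (M' i)).det) x := by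
  have hg : ∀ i, HasFDerivAt (fun s => M s i)
      ((1 : ℝ →L[ℝ] ℝ).smulRight (M' i)) x := by
    intro i
    exact (hasDerivAt_pi.2 fun j => h i j).hasFDerivAt
  have hd := HasFDerivAt.multilinear_comp (f := detCM n) (g := fun i s => M s i)
    (g' := fun i => (1 : ℝ →L[ℝ] ℝ).smulRight (M' i)) (x := x) hg
  have := hd.hasDerivAt
  refine this.congr_deriv ?_
  simp only [ContinuousLinearMap.coe_sum', Finset.sum_apply, ContinuousLinearMap.coe_comp',
    Function.comp_apply, ContinuousLinearMap.smulRight_apply, ContinuousLinearMap.one_apply,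
    one_smul]
  refine Finset.sum_congr rfl fun i _ => ?_
  rw [ContinuousMultilinearMap.toContinuousLinearMap_apply]
  rfl

theorem sum_det_updateRow_eq_trace {n : ℕ} (A V : Matrix (Fin n) (Fin n) ℝ) :
    ∑ i, (A.updateRow i (V i)).det = (Matrix.adjugate A * V).trace := by
  have h : ∀ i, (A.updateRow i (V i)).det = ∑ k, Matrix.adjugate A k i * V i k := by
    intro i
    rw [← Matrix.det_transpose, ← Matrix.updateCol_transpose, ← Matrix.cramer_apply,
      Matrix.cramer_eq_adjugate_mulVec, ← Matrix.adjugate_transpose]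
    simp only [Matrix.mulVec, dotProduct, Matrix.transpose_apply]
  simp only [h, Matrix.trace, Matrix.diag, Matrix.mul_apply]
  rw [Finset.sum_comm]

theorem hasDerivAt_det {n : ℕ} {M : ℝ → Matrix (Fin n) (Fin n) ℝ}
    {M' : Matrix (Fin n) (Fin n) ℝ} {x : ℝ}
    (h : ∀ i j, HasDerivAt (fun s => M s i j) (M' i j) x) :
    HasDerivAt (fun s => (M s).det) ((Matrix.adjugate (M x) * M').trace) x := by
  have := hasDerivAt_det' h
  rwa [sum_det_updateRow_eq_trace] at this

theorem hasDerivAt_matmul {n : ℕ} {A B : ℝ → Matrix (Fin n) (Fin n) ℝ}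
    {A' B' : Matrix (Fin n) (Fin n) ℝ} {x : ℝ}
    (hA : ∀ i j, HasDerivAt (fun s => A s i j) (A' i j) x)
    (hB : ∀ i j, HasDerivAt (fun s => B s i j) (B' i j) x) (i j : Fin n) :
    HasDerivAt (fun s => (A s * B s) i j) ((A' * B x + A x * B') i j) x := by
  have h := HasDerivAt.fun_sum (fun k (_ : k ∈ Finset.univ) => (hA i k).mul (hB k j))
  have e1 : (fun s => (A s * B s) i j) = fun s => ∑ k, A s i k * B s k j := by
    funext s; rw [Matrix.mul_apply]
  rw [e1]
  refine h.congr_deriv ?_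
  simp [Matrix.add_apply, Matrix.mul_apply, Finset.sum_add_distrib]

theorem hasDerivAt_inv_entry {n : ℕ} {H : ℝ → Matrix (Fin n) (Fin n) ℝ}
    {H' : Matrix (Fin n) (Fin n) ℝ}
    (hd : ∀ i j, HasDerivAt (fun s => H s i j) (H' i j) 0)
    (hdet : ∀ᶠ s in nhds 0, IsUnit (H s).det) (i j : Fin n) :
    HasDerivAt (fun s => (H s)⁻¹ i j) ((-((H 0)⁻¹ * H' * (H 0)⁻¹)) i j) 0 := by
  -- existence of some derivative for the inverse entries
  have hadj : ∀ k l, HasDerivAt (fun s => (H s).adjugate k l)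
      ((Matrix.adjugate ((H 0).updateRow l (Pi.single k 1)) * (H'.updateRow l 0)).trace) 0 := by
    intro k l
    have h1 : ∀ a b, HasDerivAt (fun s => ((H s).updateRow l (Pi.single k 1)) a b)
        ((H'.updateRow l 0) a b) 0 := by
      intro a b
      rcases eq_or_ne a l with rfl | hal
      · simpa [Matrix.updateRow_apply] using hasDerivAt_const (0:ℝ) ((Pi.single k (1:ℝ) : Fin n → ℝ) b)
      · simpa [Matrix.updateRow_apply, hal] using hd a b
    have := hasDerivAt_det h1
    convert this using 1
    funext s; rw [Matrix.adjugate_apply]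
  have hdet0 : IsUnit (H 0).det := hdet.self_of_nhds
  have hW : ∀ k l, HasDerivAt (fun s => (H s)⁻¹ k l)
      (deriv (fun s => (H s)⁻¹ k l) 0) 0 := by
    intro k l
    have he : (fun s => (H s)⁻¹ k l)
        = fun s => ((H s).det)⁻¹ * (H s).adjugate k l := by
      funext s
      rw [Matrix.inv_def, Matrix.smul_apply, Ring.inverse_eq_inv, smul_eq_mul]
    have h2 : HasDerivAt (fun s => ((H s).det)⁻¹ * (H s).adjugate k l)
        (-((Matrix.adjugate (H 0) * H').trace) / ((H 0).det)^2 * (H 0).adjugate k l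
          + ((H 0).det)⁻¹ * _) 0 :=
      ((hasDerivAt_det hd).inv hdet0.ne_zero).mul (hadj k l)
    rw [he]
    exact h2.deriv ▸ h2
  set W : Matrix (Fin n) (Fin n) ℝ := Matrix.of fun k l => deriv (fun s => (H s)⁻¹ k l) 0 with hWdef
  have hW' : ∀ k l, HasDerivAt (fun s => (H s)⁻¹ k l) (W k l) 0 := hW
  -- differentiate H s * (H s)⁻¹ = 1
  have hprod : ∀ k l, HasDerivAt (fun s => (H s * (H s)⁻¹) k l)
      ((H' * (H 0)⁻¹ + H 0 * W) k l) 0 := hasDerivAt_matmul hd hW'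
  have hone : H' * (H 0)⁻¹ + H 0 * W = 0 := by
    ext k l
    have hev : (fun s => (H s * (H s)⁻¹) k l) =ᶠ[nhds 0] fun _ => (1 : Matrix (Fin n) (Fin n) ℝ) k l := by
      filter_upwards [hdet] with s hs
      rw [Matrix.mul_nonsing_inv _ hs]
    have h0 : HasDerivAt (fun s => (H s * (H s)⁻¹) k l) 0 0 :=
      (hasDerivAt_const 0 ((1 : Matrix (Fin n) (Fin n) ℝ) k l)).congr_of_eventuallyEq hev
    exact (hprod k l).unique h0
  have : W = -((H 0)⁻¹ * H' * (H 0)⁻¹) := by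
    have h3 : H 0 * W = -(H' * (H 0)⁻¹) := by
      rw [eq_neg_iff_add_eq_zero, add_comm]; exact hone
    calc W = (H 0)⁻¹ * (H 0 * W) := by
            rw [← Matrix.mul_assoc, Matrix.nonsing_inv_mul _ hdet0, Matrix.one_mul]
      _ = -((H 0)⁻¹ * H' * (H 0)⁻¹) := by rw [h3, Matrix.mul_neg, Matrix.mul_assoc]
  exact this ▸ hW' i j

open ComplexOrder in
theorem complex_key {n : ℕ} (G B : Matrix (Fin n) (Fin n) ℝ)
    (hG : G.PosDef)
    (hpdc : ((G⁻¹).map (fun x => (x : ℂ)) + Complex.I • B.map (fun x => (x : ℂ))).PosDef) :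
    ((((G⁻¹).map (fun x => (x : ℂ)) + Complex.I • B.map (fun x => (x : ℂ))).det).re)^2
        * G.det = (G⁻¹ + B * G * B).det
      ∧ 0 < (((G⁻¹).map (fun x => (x : ℂ)) + Complex.I • B.map (fun x => (x : ℂ))).det).re := by
  classical
  set φ : ℝ →+* ℂ := Complex.ofRealHom with hφ
  set X : Matrix (Fin n) (Fin n) ℂ := (G⁻¹).map φ with hX
  set Bc : Matrix (Fin n) (Fin n) ℂ := B.map φ with hBc
  set Gc : Matrix (Fin n) (Fin n) ℂ := G.map φ with hGc
  set J : Matrix (Fin n) (Fin n) ℂ := Complex.I • Bc with hJ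
  set A : Matrix (Fin n) (Fin n) ℂ := X + J with hA
  have hmap : (G⁻¹).map (fun x => (x : ℂ)) + Complex.I • B.map (fun x => (x : ℂ)) = A := rfl
  have hdetG : IsUnit G.det := hG.det_pos.ne'.isUnit
  have h1 : X * Gc = 1 := by
    rw [hX, hGc, ← RingHom.mapMatrix_apply, ← RingHom.mapMatrix_apply, ← _root_.map_mul,
      Matrix.nonsing_inv_mul _ hdetG, _root_.map_one]
  have h2 : Gc * X = 1 := by
    rw [hX, hGc, ← RingHom.mapMatrix_apply, ← RingHom.mapMatrix_apply, ← _root_.map_mul,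
      Matrix.mul_nonsing_inv _ hdetG, _root_.map_one]
  have key : A * Gc * (X - J) = (G⁻¹ + B * G * B).map φ := by
    have h3 : A * Gc = 1 + J * Gc := by rw [hA, add_mul, h1]
    have h4 : J * Gc * J = -(Bc * Gc * Bc) := by
      simp only [hJ, Matrix.smul_mul, Matrix.mul_smul, smul_smul, Complex.I_mul_I, neg_smul,
        one_smul]
    have h5 : (G⁻¹ + B * G * B).map φ = X + Bc * Gc * Bc := by
      simp only [← RingHom.mapMatrix_apply, _root_.map_add, _root_.map_mul]
      simp only [RingHom.mapMatrix_apply, ← hX, ← hBc, ← hGc]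
    rw [h3, add_mul, one_mul, mul_sub, mul_assoc J Gc X, h2, mul_one, h4, h5]
    abel
  have hconj : X - J = A.map (starRingEnd ℂ) := by
    ext i j
    simp only [hA, hJ, hX, hBc, Matrix.map_apply, Matrix.sub_apply, Matrix.add_apply,
      Matrix.smul_apply, smul_eq_mul, _root_.map_add, _root_.map_mul, Complex.conj_I,
      Complex.conj_ofReal, hφ, Complex.ofRealHom_eq_coe]
    ring
  have hdetA : 0 < A.det := by rw [← hmap]; exact hpdc.det_pos
  have hre : 0 < (A.det).re ∧ (A.det).im = 0 := by
    rw [Complex.lt_def] at hdetA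
    exact ⟨by simpa using hdetA.1, by simpa using hdetA.2.symm⟩
  have hAre : A.det = ((A.det).re : ℂ) := by
    apply Complex.ext <;> simp [hre.2]
  have hGcdet : Gc.det = (G.det : ℂ) := by
    rw [hGc, ← RingHom.mapMatrix_apply, ← RingHom.map_det]; rfl
  have hconjdet : (A.map (starRingEnd ℂ)).det = (starRingEnd ℂ) A.det := by
    rw [← RingHom.mapMatrix_apply, ← RingHom.map_det]
  have hstar : (starRingEnd ℂ) A.det = A.det := by rw [hAre]; simp
  have e1 : A.det * Gc.det * A.det = ((G⁻¹ + B * G * B).det : ℂ) := by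
    have := congrArg Matrix.det key
    rw [Matrix.det_mul, Matrix.det_mul, hconj, hconjdet, hstar] at this
    rw [this, ← RingHom.mapMatrix_apply, ← RingHom.map_det]; rfl
  constructor
  · have e1' : ((A.det.re : ℂ)) * (G.det : ℂ) * (A.det.re : ℂ) = ((G⁻¹ + B * G * B).det : ℂ) := by
      rw [← hAre, ← hGcdet]; exact e1
    have e2 : (((A.det.re)^2 * G.det : ℝ) : ℂ) = ((G⁻¹ + B * G * B).det : ℂ) := by
      rw [← e1']
      push_cast
      ring
    exact_mod_cast e2
  · exact hre.1


/-- Derivative of `log det (H(s)⁻¹ + iB)` for a smooth family of real symmetric positive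
definite matrices `H(s)` and fixed skew-symmetric `B`, with `H(s)⁻¹ + iB` positive
definite: `d/ds|₀ log det (H(s)⁻¹ + iB) = -tr((H + HBHBH)⁻¹ Ḣ)` where `H = H(0)`,
`Ḣ = H'(0)`. -/
theorem stmt_16 {n : ℕ} (ε : ℝ) (hε : 0 < ε)
    (H : ℝ → Matrix (Fin n) (Fin n) ℝ) (H' B : Matrix (Fin n) (Fin n) ℝ)
    (hB : Bᵀ = -B)
    (hsmooth : ∀ i j, ContDiff ℝ (⊤ : ℕ∞) fun s => H s i j)
    (hderiv : ∀ i j, HasDerivAt (fun s => H s i j) (H' i j) 0)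
    (hsymm : ∀ s ∈ Set.Ioo (-ε) ε, (H s).IsSymm)
    (hpd : ∀ s ∈ Set.Ioo (-ε) ε, (H s).PosDef)
    (hpdc : ∀ s ∈ Set.Ioo (-ε) ε,
      ((H s)⁻¹.map (fun x => (x : ℂ)) + Complex.I • B.map (fun x => (x : ℂ))).PosDef) :
    HasDerivAt
      (fun s => Real.log
        ((((H s)⁻¹.map (fun x => (x : ℂ)) + Complex.I • B.map (fun x => (x : ℂ))).det).re))
      (-(((H 0 + H 0 * B * H 0 * B * H 0)⁻¹ * H').trace)) 0 := by
    classical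
  have h0mem : (0:ℝ) ∈ Set.Ioo (-ε) ε := ⟨by linarith, hε⟩
  have hnhds : Set.Ioo (-ε) ε ∈ nhds (0:ℝ) := Ioo_mem_nhds (by linarith) hε
  set G : Matrix (Fin n) (Fin n) ℝ := H 0 with hGdef
  have hGpd : G.PosDef := hpd 0 h0mem
  have hdetG : IsUnit G.det := hGpd.det_pos.ne'.isUnit
  have hdetev : ∀ᶠ s in nhds (0:ℝ), IsUnit (H s).det := by
    filter_upwards [hnhds] with s hs
    exact (hpd s hs).det_pos.ne'.isUnit
  set P : ℝ → Matrix (Fin n) (Fin n) ℝ := fun s => (H s)⁻¹ + B * H s * B with hPdef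
  set P' : Matrix (Fin n) (Fin n) ℝ := -(G⁻¹ * H' * G⁻¹) + B * H' * B with hP'def
  have hBc : ∀ i j, HasDerivAt (fun _ : ℝ => B i j) ((0 : Matrix (Fin n) (Fin n) ℝ) i j) 0 := by
    intro i j; simpa using hasDerivAt_const (0:ℝ) (B i j)
  have hPderiv : ∀ i j, HasDerivAt (fun s => P s i j) (P' i j) 0 := by
    intro i j
    have h1 := hasDerivAt_inv_entry hderiv hdetev i j
    have h2 := hasDerivAt_matmul (fun a b => hasDerivAt_matmul hBc hderiv a b) hBc i j
    have h2' : HasDerivAt (fun s => (B * H s * B) i j) ((B * H' * B) i j) 0 := by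
      simpa using h2
    exact h1.add h2'
  obtain ⟨hkey0, hr0⟩ := complex_key G B hGpd (hpdc 0 h0mem)
  have hP0 : P 0 = G⁻¹ + B * G * B := rfl
  have hdetP0pos : 0 < (P 0).det := by
    rw [hP0, ← hkey0]
    exact mul_pos (pow_pos hr0 2) hGpd.det_pos
  have hdetP0unit : IsUnit (P 0).det := hdetP0pos.ne'.isUnit
  have hinvsmul : ∀ (M N : Matrix (Fin n) (Fin n) ℝ),
      (M⁻¹ * N).trace = (M.adjugate * N).trace / M.det := by
    intro M N
    rw [Matrix.inv_def, Ring.inverse_eq_inv, Matrix.smul_mul, Matrix.trace_smul, smul_eq_mul,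
      div_eq_inv_mul]
  have hlogP : HasDerivAt (fun s => Real.log ((P s).det)) (((P 0)⁻¹ * P').trace) 0 := by
    have h := (hasDerivAt_det hPderiv).log hdetP0pos.ne'
    rw [hinvsmul]
    exact h
  have hlogH : HasDerivAt (fun s => Real.log ((H s).det)) ((G⁻¹ * H').trace) 0 := by
    have h := (hasDerivAt_det hderiv).log hGpd.det_pos.ne'
    rw [hinvsmul]
    exact h
  have hphi : HasDerivAt (fun s => (Real.log ((P s).det) - Real.log ((H s).det)) / 2)
      ((((P 0)⁻¹ * P').trace - (G⁻¹ * H').trace) / 2) 0 := (hlogP.sub hlogH).div_const 2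
  have heq : (fun s => Real.log
        ((((H s)⁻¹.map (fun x => (x : ℂ)) + Complex.I • B.map (fun x => (x : ℂ))).det).re))
      =ᶠ[nhds (0:ℝ)] (fun s => (Real.log ((P s).det) - Real.log ((H s).det)) / 2) := by
    filter_upwards [hnhds] with s hs
    obtain ⟨hk, hr⟩ := complex_key (H s) B (hpd s hs) (hpdc s hs)
    have hdetHpos : 0 < (H s).det := (hpd s hs).det_pos
    have hPs : (P s).det = (((((H s)⁻¹.map (fun x => (x : ℂ))
        + Complex.I • B.map (fun x => (x : ℂ))).det).re))^2 * (H s).det := hk.symm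
    rw [hPs, Real.log_mul (by positivity) hdetHpos.ne', Real.log_pow]
    push_cast
    ring
  have hmain := hphi.congr_of_eventuallyEq heq
  set Q : Matrix (Fin n) (Fin n) ℝ := G + G * B * G * B * G with hQdef
  have hG1 : G⁻¹ * G = 1 := Matrix.nonsing_inv_mul _ hdetG
  have hG2 : G * G⁻¹ = 1 := Matrix.mul_nonsing_inv _ hdetG
  have hQ : Q = G * P 0 * G := by
    rw [hP0, hQdef, Matrix.mul_add, Matrix.mul_nonsing_inv _ hdetG, Matrix.add_mul,
      Matrix.one_mul]
    noncomm_ring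
  have hdetQ : IsUnit Q.det := by
    rw [hQ, Matrix.det_mul, Matrix.det_mul]
    exact (hdetG.mul hdetP0unit).mul hdetG
  have hKQ : Q⁻¹ * Q = 1 := Matrix.nonsing_inv_mul _ hdetQ
  have hQK : Q * Q⁻¹ = 1 := Matrix.mul_nonsing_inv _ hdetQ
  have cQ1 : ∀ M : Matrix (Fin n) (Fin n) ℝ, Q⁻¹ * (Q * M) = M := by
    intro M; rw [← Matrix.mul_assoc, hKQ, Matrix.one_mul]
  have cQ2 : ∀ M : Matrix (Fin n) (Fin n) ℝ, Q * (Q⁻¹ * M) = M := by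
    intro M; rw [← Matrix.mul_assoc, hQK, Matrix.one_mul]
  have cG1 : ∀ M : Matrix (Fin n) (Fin n) ℝ, G * (G⁻¹ * M) = M := by
    intro M; rw [← Matrix.mul_assoc, hG2, Matrix.one_mul]
  have cG2 : ∀ M : Matrix (Fin n) (Fin n) ℝ, G⁻¹ * (G * M) = M := by
    intro M; rw [← Matrix.mul_assoc, hG1, Matrix.one_mul]
  have hPinv : (P 0)⁻¹ = G * Q⁻¹ * G := by
    apply Matrix.inv_eq_right_inv
    have h : G * P 0 * G * Q⁻¹ = 1 := by rw [← hQ]; exact hQK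
    have h2 : P 0 * (G * Q⁻¹) = G⁻¹ := by
      symm
      apply Matrix.inv_eq_right_inv
      calc G * (P 0 * (G * Q⁻¹)) = G * P 0 * G * Q⁻¹ := by
            rw [Matrix.mul_assoc (G * P 0) G Q⁻¹, ← Matrix.mul_assoc]
        _ = 1 := h
    calc P 0 * (G * Q⁻¹ * G) = P 0 * (G * Q⁻¹) * G := by rw [← Matrix.mul_assoc]
      _ = G⁻¹ * G := by rw [h2]
      _ = 1 := hG1
  have hcommQ : G * B * Q = Q * (B * G) := by
    rw [hQdef]; noncomm_ring
  have hcomm : ∀ M : Matrix (Fin n) (Fin n) ℝ, Q⁻¹ * (G * (B * M)) = B * (G * (Q⁻¹ * M)) := by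
    intro M
    have h2 := congrArg (fun X => Q⁻¹ * X * (Q⁻¹ * M)) hcommQ
    simp only [Matrix.mul_assoc, cQ1, cQ2] at h2
    exact h2
  have hident : G⁻¹ - Q⁻¹ = B * (G * (Q⁻¹ * (G * B))) := by
    have e1 : (G⁻¹ - Q⁻¹) * Q = B * (G * (Q⁻¹ * (G * (B * Q)))) := by
      rw [Matrix.sub_mul, hKQ]
      nth_rewrite 1 [hQdef]
      rw [hcomm Q]
      simp only [Matrix.mul_add, Matrix.mul_assoc, cG2, cQ1, cQ2, hKQ, hG1, hG2, Matrix.mul_one]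
      abel
    have e2 := congrArg (fun X => X * Q⁻¹) e1
    simp only [Matrix.mul_assoc, hQK, Matrix.mul_one] at e2
    exact e2
  have t1 : (G * Q⁻¹ * G * (G⁻¹ * H' * G⁻¹)).trace = (Q⁻¹ * H').trace := by
    have e : G * Q⁻¹ * G * (G⁻¹ * H' * G⁻¹) = G * (Q⁻¹ * (H' * G⁻¹)) := by
      simp only [Matrix.mul_assoc, cG1, cG2]
    have e2 : Q⁻¹ * (H' * G⁻¹) * G = Q⁻¹ * H' := by
      simp only [Matrix.mul_assoc, hG1, Matrix.mul_one]
    rw [e, Matrix.trace_mul_comm, e2]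
  have t2 : (G * Q⁻¹ * G * (B * H' * B)).trace = (B * (G * (Q⁻¹ * (G * B))) * H').trace := by
    have e : G * Q⁻¹ * G * (B * H' * B) = (G * Q⁻¹ * G * (B * H')) * B := by
      simp only [Matrix.mul_assoc]
    rw [e, Matrix.trace_mul_comm]
    congr 1
    simp only [Matrix.mul_assoc]
  have hvalue : ((((P 0)⁻¹ * P').trace - (G⁻¹ * H').trace) / 2) = -((Q⁻¹ * H').trace) := by
    have ht1 : ((P 0)⁻¹ * P').trace
        = -((Q⁻¹ * H').trace) + (B * (G * (Q⁻¹ * (G * B))) * H').trace := by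
      rw [hPinv, hP'def, Matrix.mul_add, Matrix.trace_add, Matrix.mul_neg, Matrix.trace_neg,
        t1, t2]
    rw [ht1, ← hident, Matrix.sub_mul, Matrix.trace_sub]
    ring
  exact hvalue ▸ hmain
end

section
/- Let H be a real symmetric positive definite n×n matrix and B a real skew-symmetric n×n matrix with H + iB Hermitian positive definite. Then det(H + iB) = det(H) · ∏_{j}(1 − λ_j²) where ±λ_j are the (real, paired) eigenvalues of the Hermitian matrix i H^{-1/2} B H^{-1/2}; consequently 0 < det(H + iB) ≤ det(H), with equality if and only if B = 0. -/
open Matrix ComplexOrder Polynomial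

/-!
With `R = H^{1/2}` one has `H + iB = R (1 + M) R` for the Hermitian matrix `M = i R⁻¹ B R⁻¹`.
Since `M` is purely imaginary, `Mᵀ = -M`, so `M` and `-M` share their characteristic polynomial
and the spectrum of `M` is symmetric about `0`. Congruence preserves positive definiteness, so
`1 + M > 0`, i.e. every eigenvalue exceeds `-1`, and by the symmetry `|λ_j| < 1`. Then
`det (H + iB) = det H ⋅ ∏ (1 + λ_j)`, and pairing `λ_j` with `-λ_j` rewrites `∏ (1 + λ_j)` as
`∏ √(1 - λ_j²) ∈ (0, 1]`, with equality exactly when all `λ_j` vanish, i.e. when `M = 0`.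
-/

theorem Fintype.exists_perm_comp_eq_of_map_univ_eq {ι α : Type*} [Fintype ι] [DecidableEq α]
    {f g : ι → α} (h : Finset.univ.val.map f = Finset.univ.val.map g) :
    ∃ σ : Equiv.Perm ι, ∀ i, f (σ i) = g i := by
  have hcard (c : α) : Fintype.card {i // g i = c} = Fintype.card {i // f i = c} := by
    have := congrArg (Multiset.count c) h
    simp only [Multiset.count_map, Fintype.card_subtype, eq_comm (a := c)] at this ⊢
    exact this.symm
  exact ⟨Equiv.ofFiberEquiv fun c => Fintype.equivOfCardEq (hcard c),
    Equiv.ofFiberEquiv_map _⟩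

namespace Matrix.IsHermitian

variable {𝕜 n : Type*} [RCLike 𝕜] [Fintype n] [DecidableEq n] {A : Matrix n n 𝕜}

theorem charpoly_neg (hA : A.IsHermitian) :
    (-A).charpoly = ∏ i, (X - C ((-hA.eigenvalues i : ℝ) : 𝕜)) := by
  conv_lhs => rw [hA.spectral_theorem, ← map_neg, Unitary.conjStarAlgAut_apply, charpoly_mul_comm,
    ← mul_assoc]
  rw [diagonal_neg]
  simp [charpoly_diagonal]

theorem roots_charpoly_neg (hA : A.IsHermitian) :
    (-A).charpoly.roots = Multiset.map (RCLike.ofReal ∘ (-hA.eigenvalues)) Finset.univ.val := by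
  rw [hA.charpoly_neg, Polynomial.roots_prod _ _
    (Finset.prod_ne_zero_iff.mpr fun i _ => X_sub_C_ne_zero _)]
  simp

theorem det_one_add (hA : A.IsHermitian) :
    (1 + A).det = ((∏ i, (1 + hA.eigenvalues i) : ℝ) : 𝕜) := by
  have h := congrArg (eval (-1)) hA.charpoly_eq
  rw [eval_charpoly, eval_prod] at h
  have hneg : scalar n (-1 : 𝕜) - A = -(1 + A) := by
    rw [scalar_apply, ← smul_one_eq_diagonal, neg_one_smul, neg_add]; abel
  simp only [eval_sub, eval_X, eval_C, hneg, det_neg, ← neg_add', Finset.prod_neg] at h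
  push_cast
  exact mul_left_cancel₀ (pow_ne_zero _ (neg_ne_zero.mpr one_ne_zero)) h

theorem exists_perm_eigenvalues_eq_neg (hA : A.IsHermitian) (hskew : Aᵀ = -A) :
    ∃ τ : Equiv.Perm n, ∀ j, hA.eigenvalues (τ j) = -hA.eigenvalues j := by
  have hroots := hA.roots_charpoly_neg
  rw [← hskew, charpoly_transpose, hA.roots_charpoly_eq_eigenvalues,
    ← Multiset.map_map, ← Multiset.map_map] at hroots
  exact Fintype.exists_perm_comp_eq_of_map_univ_eq
    (Multiset.map_injective RCLike.ofReal_injective hroots)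

theorem neg_one_lt_eigenvalues (hA : A.IsHermitian) (h : (1 + A).PosDef) (j : n) :
    -1 < hA.eigenvalues j := by
  set v := hA.eigenvectorBasis j
  have hv : RCLike.re (star ⇑v ⬝ᵥ ⇑v) = 1 := by
    rw [dotProduct_comm, ← EuclideanSpace.inner_eq_star_dotProduct, inner_self_eq_norm_sq_to_K,
      hA.eigenvectorBasis.orthonormal.1 j]
    simp
  have hpos := h.re_dotProduct_pos (x := ⇑v)
    (by simpa using hA.eigenvectorBasis.orthonormal.ne_zero j)
  rw [add_mulVec, one_mulVec, dotProduct_add, map_add, hv, ← hA.eigenvalues_eq] at hpos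
  linarith

end Matrix.IsHermitian

section SqrtProd

variable {ι : Type*} [Fintype ι] {μ : ι → ℝ}

theorem prod_one_add_eq_prod_sqrt_one_sub_sq (τ : Equiv.Perm ι) (hτ : ∀ j, μ (τ j) = -μ j)
    (h : ∀ j, 0 ≤ 1 + μ j) : ∏ j, (1 + μ j) = ∏ j, √(1 - μ j ^ 2) := by
  have hsplit (j : ι) : √(1 - μ j ^ 2) = √(1 + μ j) * √(1 + μ (τ j)) := by
    rw [hτ, ← Real.sqrt_mul (h j)]
    ring_nf
  rw [Finset.prod_congr rfl fun j _ => hsplit j, Finset.prod_mul_distrib,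
    Equiv.prod_comp τ fun j => √(1 + μ j), ← Finset.prod_mul_distrib]
  exact Finset.prod_congr rfl fun j _ => (Real.mul_self_sqrt (h j)).symm

theorem sqrt_one_sub_sq_pos {x : ℝ} (hx : |x| < 1) : 0 < √(1 - x ^ 2) :=
  Real.sqrt_pos.mpr (sub_pos.mpr ((sq_lt_one_iff_abs_lt_one x).mpr hx))

theorem prod_sqrt_one_sub_sq_pos (h : ∀ j, |μ j| < 1) : 0 < ∏ j, √(1 - μ j ^ 2) :=
  Finset.prod_pos fun j _ => sqrt_one_sub_sq_pos (h j)

theorem sqrt_one_sub_sq_le_one (x : ℝ) : √(1 - x ^ 2) ≤ 1 :=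
  Real.sqrt_le_one.mpr (sub_le_self 1 (sq_nonneg x))

theorem prod_sqrt_one_sub_sq_le_one : ∏ j, √(1 - μ j ^ 2) ≤ 1 :=
  Finset.prod_le_one (fun _ _ => Real.sqrt_nonneg _) fun j _ => sqrt_one_sub_sq_le_one (μ j)

theorem prod_sqrt_one_sub_sq_eq_one_iff (h : ∀ j, |μ j| < 1) :
    ∏ j, √(1 - μ j ^ 2) = 1 ↔ μ = 0 := by
  refine ⟨fun hprod => ?_, fun hμ => by simp [hμ]⟩
  by_contra hμ
  obtain ⟨j, hj⟩ := Function.ne_iff.mp hμ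
  have hlt : √(1 - μ j ^ 2) < 1 :=
    (Real.sqrt_lt' one_pos).mpr (by nlinarith [pow_pos (abs_pos.mpr hj) 2, sq_abs (μ j)])
  have := Finset.prod_lt_prod (f := fun i => √(1 - μ i ^ 2)) (g := fun _ => 1)
    (fun i _ => sqrt_one_sub_sq_pos (h i))
    (fun i _ => sqrt_one_sub_sq_le_one (μ i)) ⟨j, Finset.mem_univ j, hlt⟩
  simp [hprod] at this

end SqrtProd

section ComplexifiedPencil

variable {n : Type*}

theorem transpose_I_smul_map_ofReal (C : Matrix n n ℝ) :
    (Complex.I • C.map (fun x => (x : ℂ)))ᵀ = -(Complex.I • C.map (fun x => (x : ℂ)))ᴴ := by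
  ext i j
  simp

theorem star_map_ofReal_of_isSymm {R : Matrix n n ℝ} (hR : R.IsSymm) :
    star (R.map (fun x => (x : ℂ))) = R.map (fun x => (x : ℂ)) := by
  ext i j
  simp [hR.apply]

variable [Fintype n] [DecidableEq n] {H B R : Matrix n n ℝ}

theorem map_ofReal_add_I_smul_eq (hR : IsUnit R) (hRsq : R * R = H) :
    H.map (fun x => (x : ℂ)) + Complex.I • B.map (fun x => (x : ℂ)) =
      R.map (fun x => (x : ℂ)) * (1 + Complex.I • (R⁻¹ * B * R⁻¹).map (fun x => (x : ℂ))) *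
        R.map (fun x => (x : ℂ)) := by
  have hRBR : R * (R⁻¹ * B * R⁻¹) * R = B := by
    rw [mul_assoc R⁻¹, mul_nonsing_inv_cancel_left _ _ ((isUnit_iff_isUnit_det R).mp hR),
      nonsing_inv_mul_cancel_right _ _ ((isUnit_iff_isUnit_det R).mp hR)]
  have hmap (X Y : Matrix n n ℝ) : (X * Y).map (fun x => (x : ℂ)) =
      X.map (fun x => (x : ℂ)) * Y.map (fun x => (x : ℂ)) :=
    Matrix.map_mul (f := Complex.ofRealHom)
  rw [Matrix.mul_add, Matrix.add_mul, mul_one, Matrix.mul_smul, Matrix.smul_mul,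
    ← hmap, ← hmap, ← hmap, hRsq, hRBR]

theorem I_smul_map_ofReal_conj_eq_zero_iff (hR : IsUnit R) :
    Complex.I • (R⁻¹ * B * R⁻¹).map (fun x => (x : ℂ)) = 0 ↔ B = 0 := by
  have hR' : IsUnit R⁻¹ := (isUnit_nonsing_inv_iff).mpr hR
  rw [smul_eq_zero, or_iff_right Complex.I_ne_zero, ← Matrix.map_zero _ Complex.ofReal_zero,
    (Matrix.map_injective Complex.ofReal_injective).eq_iff, hR'.mul_left_eq_zero,
    hR'.mul_right_eq_zero]

theorem det_map_ofReal_add_I_smul (hR : IsUnit R) (hRsq : R * R = H) :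
    (H.map (fun x => (x : ℂ)) + Complex.I • B.map (fun x => (x : ℂ))).det =
      H.det * (1 + Complex.I • (R⁻¹ * B * R⁻¹).map (fun x => (x : ℂ))).det := by
  have hdetR : (R.map (fun x => (x : ℂ))).det = R.det :=
    (RingHom.map_det Complex.ofRealHom R).symm
  rw [map_ofReal_add_I_smul_eq hR hRsq, det_mul, det_mul, hdetR, ← hRsq, det_mul]
  push_cast
  ring

theorem posDef_one_add_I_smul_map_ofReal_conj (hR : IsUnit R) (hRs : R.IsSymm) (hRsq : R * R = H)
    (hpd : (H.map (fun x => (x : ℂ)) + Complex.I • B.map (fun x => (x : ℂ))).PosDef) :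
    (1 + Complex.I • (R⁻¹ * B * R⁻¹).map (fun x => (x : ℂ))).PosDef := by
  have hRc : IsUnit (R.map (fun x => (x : ℂ))) := hR.map Complex.ofRealHom.mapMatrix
  rw [map_ofReal_add_I_smul_eq hR hRsq] at hpd
  nth_rw 1 [← star_map_ofReal_of_isSymm hRs] at hpd
  exact (IsUnit.posDef_star_left_conjugate_iff hRc).mp hpd

end ComplexifiedPencil

theorem stmt_19_general {n : ℕ} (H B R : Matrix (Fin n) (Fin n) ℝ)
    (hHpd : H.PosDef)
    (hR : R.PosDef) (hRs : R.IsSymm) (hRsq : R * R = H)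
    (hM : (Complex.I • ((R⁻¹ * B * R⁻¹).map (fun x => (x : ℂ)))).IsHermitian)
    (hpd : (H.map (fun x => (x : ℂ)) + Complex.I • B.map (fun x => (x : ℂ))).PosDef) :
    (∃ τ : Fin n ≃ Fin n, ∀ j, hM.eigenvalues (τ j) = -hM.eigenvalues j) ∧
    ((H.map (fun x => (x : ℂ)) + Complex.I • B.map (fun x => (x : ℂ))).det).re =
      H.det * ∏ j, Real.sqrt (1 - hM.eigenvalues j ^ 2) ∧
    0 < ((H.map (fun x => (x : ℂ)) + Complex.I • B.map (fun x => (x : ℂ))).det).re ∧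
    ((H.map (fun x => (x : ℂ)) + Complex.I • B.map (fun x => (x : ℂ))).det).re ≤ H.det ∧
    (((H.map (fun x => (x : ℂ)) + Complex.I • B.map (fun x => (x : ℂ))).det).re = H.det ↔
      B = 0) := by
  have hRu : IsUnit R := hR.isUnit
  obtain ⟨τ, hτ⟩ := hM.exists_perm_eigenvalues_eq_neg (by rw [transpose_I_smul_map_ofReal, hM.eq])
  have hgt := hM.neg_one_lt_eigenvalues (posDef_one_add_I_smul_map_ofReal_conj hRu hRs hRsq hpd)
  have habs (j : Fin n) : |hM.eigenvalues j| < 1 :=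
    abs_lt.mpr ⟨hgt j, by linarith [hτ j ▸ hgt (τ j)]⟩
  have hdet : ((H.map (fun x => (x : ℂ)) + Complex.I • B.map (fun x => (x : ℂ))).det).re =
      H.det * ∏ j, √(1 - hM.eigenvalues j ^ 2) := by
    rw [det_map_ofReal_add_I_smul hRu hRsq, hM.det_one_add,
      ← prod_one_add_eq_prod_sqrt_one_sub_sq τ hτ fun j => by linarith [hgt j]]
    exact Complex.re_ofReal_mul _ _
  refine ⟨⟨τ, hτ⟩, hdet, ?_, ?_, ?_⟩ <;> rw [hdet]
  · exact mul_pos hHpd.det_pos (prod_sqrt_one_sub_sq_pos habs)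
  · exact mul_le_of_le_one_right hHpd.det_pos.le prod_sqrt_one_sub_sq_le_one
  · rw [mul_eq_left₀ hHpd.det_pos.ne', prod_sqrt_one_sub_sq_eq_one_iff habs,
      hM.eigenvalues_eq_zero_iff, I_smul_map_ofReal_conj_eq_zero_iff hRu]

/-- For `H` real symmetric positive definite (with positive definite square root `R`,
`R * R = H`) and `B` real skew-symmetric with `H + iB` positive definite: the eigenvalues
of the Hermitian matrix `i R⁻¹ B R⁻¹` come in pairs `±λ`, and
`det(H + iB) = det H ⋅ ∏_j √(1 - λ_j²)` (the paired product form of `∏ (1 - λ_j²)`);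
consequently `0 < det(H + iB) ≤ det H`, with equality iff `B = 0`. -/
theorem stmt_19 {n : ℕ} (H B R : Matrix (Fin n) (Fin n) ℝ)
    (hH : H.IsSymm) (hHpd : H.PosDef) (hB : Bᵀ = -B)
    (hR : R.PosDef) (hRs : R.IsSymm) (hRsq : R * R = H)
    (hM : (Complex.I • ((R⁻¹ * B * R⁻¹).map (fun x => (x : ℂ)))).IsHermitian)
    (hpd : (H.map (fun x => (x : ℂ)) + Complex.I • B.map (fun x => (x : ℂ))).PosDef) :
    (∃ τ : Fin n ≃ Fin n, ∀ j, hM.eigenvalues (τ j) = -hM.eigenvalues j) ∧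
    ((H.map (fun x => (x : ℂ)) + Complex.I • B.map (fun x => (x : ℂ))).det).re =
      H.det * ∏ j, Real.sqrt (1 - hM.eigenvalues j ^ 2) ∧
    0 < ((H.map (fun x => (x : ℂ)) + Complex.I • B.map (fun x => (x : ℂ))).det).re ∧
    ((H.map (fun x => (x : ℂ)) + Complex.I • B.map (fun x => (x : ℂ))).det).re ≤ H.det ∧
    (((H.map (fun x => (x : ℂ)) + Complex.I • B.map (fun x => (x : ℂ))).det).re = H.det ↔
      B = 0) :=
  stmt_19_general H B R hHpd hR hRs hRsq hM hpd
end
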